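/- arXiv:1806.01887 — 5 statements merged into one kernel-verified Lean document; each statement's English description precedes it below -/
import Mathlib

section
/- The preorder on the quotient GL₂(Ẑ)\M₂(Ẑ) is a partial order. Concretely: for all 2×2 matrices a, b over the profinite integers Ẑ, if there exist m, n ∈ M₂(Ẑ) with a = m·b and b = n·a, then there exists u ∈ GL₂(Ẑ) with b = u·a (i.e. a and b have the same class under left multiplication by GL₂(Ẑ)). -/
/-!
`M₂(Ẑ) ≅ ∏_p M₂(ℤ_p)` has stable range one: for matrices over a field, `a + c b` can be made
invertible by extending `a` from `ker b` to an automorphism `u` and factoring `u - a` through `b`;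
this lifts from the residue field to the local ring `ℤ_p` because a matrix is invertible as soon
as its determinant is, and it passes to products. In a ring of stable range one, `a = m b` and
`b = n a` make `n` and `1 - m n` comaximal, so some `u = n + c (1 - m n)` is a unit, and
`u a = n a = b` because `(1 - m n) a = 0`.
-/

noncomputable section

instance (p : Nat.Primes) : Fact (p : ℕ).Prime := ⟨p.2⟩

/-- The profinite integers `Ẑ = ∏_p ℤ_p`. -/
abbrev ZHat : Type := ∀ p : Nat.Primes, ℤ_[(p : ℕ)]

/-- `M₂(Ẑ)`, the multiplicative monoid of 2×2 matrices over the profinite integers. -/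
abbrev M2ZHat : Type := Matrix (Fin 2) (Fin 2) ZHat

/-- Bass's stable range one condition, for left ideals. -/
def HasStableRangeOne (R : Type*) [Semiring R] : Prop :=
  ∀ a b : R, (∃ x y : R, x * a + y * b = 1) → ∃ c : R, IsUnit (a + c * b)

namespace HasStableRangeOne

theorem exists_unit_mul_eq {R : Type*} [Ring R] (hR : HasStableRangeOne R) {a b m n : R}
    (ha : a = m * b) (hb : b = n * a) : ∃ u : Rˣ, b = u * a := by
  obtain ⟨c, u, hu⟩ := hR n (1 - m * n) ⟨m, 1, by noncomm_ring⟩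
  refine ⟨u, ?_⟩
  -- `(1 - m n) a = a - m b = 0`, so the correction term does not change `n a = b`.
  rw [hu, add_mul, mul_assoc, sub_mul, one_mul, mul_assoc, ← hb, ← ha, sub_self, mul_zero,
    add_zero, hb]

theorem of_surjective {R S F : Type*} [Semiring R] [Semiring S] [FunLike F R S]
    [RingHomClass F R S] (f : F) [IsLocalHom f] (hf : Function.Surjective f)
    (hS : HasStableRangeOne S) : HasStableRangeOne R := by
  rintro a b ⟨x, y, hxy⟩
  obtain ⟨c', hc'⟩ :=
    hS (f a) (f b) ⟨f x, f y, by simp only [← map_mul, ← map_add, hxy, map_one]⟩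
  obtain ⟨c, rfl⟩ := hf c'
  exact ⟨c, IsUnit.of_map f _ (by simpa only [map_add, map_mul] using hc')⟩

theorem pi {ι : Type*} {R : ι → Type*} [∀ i, Semiring (R i)]
    (hR : ∀ i, HasStableRangeOne (R i)) : HasStableRangeOne (∀ i, R i) := by
  rintro a b ⟨x, y, hxy⟩
  choose c hc using fun i ↦ hR i (a i) (b i) ⟨x i, y i, congr_fun hxy i⟩
  exact ⟨c, Pi.isUnit_iff.2 hc⟩

end HasStableRangeOne

theorem LinearMap.exists_comp_eq_of_ker_le {K V V' V'' : Type*} [DivisionRing K]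
    [AddCommGroup V] [Module K V] [AddCommGroup V'] [Module K V'] [AddCommGroup V'']
    [Module K V''] {b : V →ₗ[K] V'} {f : V →ₗ[K] V''} (h : ker b ≤ ker f) :
    ∃ c : V' →ₗ[K] V'', c ∘ₗ b = f := by
  obtain ⟨g, hg⟩ := ((ker b).liftQ b le_rfl).exists_leftInverse_of_injective
    ((ker b).ker_liftQ_eq_bot b le_rfl le_rfl)
  refine ⟨(ker b).liftQ f h ∘ₗ g, ?_⟩
  ext v
  have hv := congr($hg ((ker b).mkQ v))
  simp only [LinearMap.comp_apply, Submodule.mkQ_apply, Submodule.liftQ_apply,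
    LinearMap.id_apply] at hv ⊢
  rw [hv, Submodule.liftQ_apply]

theorem Module.End.hasStableRangeOne (K V : Type*) [Field K] [AddCommGroup V] [Module K V]
    [FiniteDimensional K V] : HasStableRangeOne (Module.End K V) := by
  rintro a b ⟨x, y, hxy⟩
  have hinj : Function.Injective (a.domRestrict (LinearMap.ker b)) := by
    rw [← LinearMap.ker_eq_bot, LinearMap.ker_eq_bot']
    rintro ⟨v, hv⟩ hav
    replace hav : a v = 0 := hav
    ext
    calc v = x (a v) + y (b v) := congr($hxy v).symm
      _ = 0 := by rw [hav, LinearMap.mem_ker.1 hv, map_zero, map_zero, add_zero]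
  -- `u` extends `a` from `ker b`, so `u - a` kills `ker b` and factors through `b`.
  obtain ⟨u, hu⟩ := Submodule.exists_linearEquiv_restrict_eq (LinearEquiv.ofInjective _ hinj)
  obtain ⟨c, hc⟩ := LinearMap.exists_comp_eq_of_ker_le (b := b) (f := u.toLinearMap - a)
    fun v hv ↦ by simp [← hu ⟨v, hv⟩]
  refine ⟨c, ?_⟩
  rw [Module.End.mul_eq_comp, hc, add_sub_cancel]
  exact (Module.End.isUnit_iff _).2 u.bijective

theorem Matrix.hasStableRangeOne_of_field (n K : Type*) [Fintype n] [DecidableEq n] [Field K] :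
    HasStableRangeOne (Matrix n n K) :=
  (Module.End.hasStableRangeOne K (n → K)).of_surjective Matrix.toLinAlgEquiv'
    Matrix.toLinAlgEquiv'.surjective

instance RingHom.isLocalHom_mapMatrix {n R S : Type*} [Fintype n] [DecidableEq n] [CommRing R]
    [CommRing S] (f : R →+* S) [IsLocalHom f] : IsLocalHom (f.mapMatrix (m := n)) where
  map_nonunit M hM := by
    rw [Matrix.isUnit_iff_isUnit_det, ← RingHom.map_det] at hM
    exact (Matrix.isUnit_iff_isUnit_det M).2 (hM.of_map f _)

theorem RingHom.mapMatrix_surjective {n R S : Type*} [Fintype n] [DecidableEq n] [Semiring R]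
    [Semiring S] {f : R →+* S} (hf : Function.Surjective f) :
    Function.Surjective (f.mapMatrix (m := n)) :=
  hf.comp_left.comp_left

theorem IsLocalRing.hasStableRangeOne_matrix (n R : Type*) [Fintype n] [DecidableEq n]
    [CommRing R] [IsLocalRing R] : HasStableRangeOne (Matrix n n R) :=
  (Matrix.hasStableRangeOne_of_field n _).of_surjective (IsLocalRing.residue R).mapMatrix
    (RingHom.mapMatrix_surjective IsLocalRing.residue_surjective)

theorem partialOrder_on_GL2ZHat_quotient (a b : M2ZHat)
    (h : ∃ m n : M2ZHat, a = m * b ∧ b = n * a) :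
    ∃ u : M2ZHatˣ, b = u.val * a := by
  obtain ⟨m, n, ha, hb⟩ := h
  have hZHat : HasStableRangeOne M2ZHat :=
    (HasStableRangeOne.pi fun _ ↦ IsLocalRing.hasStableRangeOne_matrix (Fin 2) _).of_surjective
      Matrix.piRingEquiv Matrix.piRingEquiv.surjective
  exact hZHat.exists_unit_mul_eq ha hb
end
end

section
/- For every additive subgroup A of ℚ² with ℤ² ⊆ A ⊆ ℚ², there exists a 2×2 matrix x over the profinite integers Ẑ such that A = A_x, where A_x = {v ∈ ℚ² : x·v ∈ Ẑ²}. -/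
noncomputable section
open scoped TensorProduct

/-- The finite adele ring `𝔸_f = Ẑ ⊗ ℚ` of `ℚ`. -/
abbrev AF : Type := ZHat ⊗[ℤ] ℚ

/-- The embedding `Ẑ ⊆ 𝔸_f`. -/
def iZ : ZHat →+* AF := Algebra.TensorProduct.includeLeftRingHom

/-- The diagonal embedding `ℚ ⊆ 𝔸_f`. -/
def iQ : ℚ →+* AF :=
  (Algebra.TensorProduct.includeRight (R := ℤ) (A := ZHat) (B := ℚ)).toRingHom

/-- For `x ∈ M₂(Ẑ)`, the subgroup `A_x = {v ∈ ℚ² : x·v ∈ Ẑ²}` of `ℚ²`, the condition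
being computed in `𝔸_f²` via the embeddings `ℚ ⊆ 𝔸_f` and `Ẑ ⊆ 𝔸_f`. -/
def Ax (x : Matrix (Fin 2) (Fin 2) ZHat) : AddSubgroup (Fin 2 → ℚ) where
  carrier := {v | ∀ i, (x.map iZ).mulVec (fun j => iQ (v j)) i ∈ iZ.range}
  zero_mem' := by
    intro i
    have : (fun j => iQ ((0 : Fin 2 → ℚ) j)) = (0 : Fin 2 → AF) := by
      funext j; exact iQ.map_zero
    rw [this, Matrix.mulVec_zero]
    exact zero_mem _
  add_mem' := by
    intro v w hv hw i
    have : (fun j => iQ ((v + w) j)) = (fun j => iQ (v j)) + (fun j => iQ (w j)) := by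
      funext j; exact iQ.map_add (v j) (w j)
    rw [this, Matrix.mulVec_add]
    exact add_mem (hv i) (hw i)
  neg_mem' := by
    intro v hv i
    have : (fun j => iQ ((-v) j)) = -(fun j => iQ (v j)) := by
      funext j; exact iQ.map_neg (v j)
    rw [this, Matrix.mulVec_neg]
    exact neg_mem (hv i)

open Matrix

/-!
Write `A_p` for the vectors of `A` with `p`-power denominator. Splitting denominators into prime
powers, `v ∈ A` iff the `p`-parts of `v` lie in the `A_p`, and `v ∈ A_x` iff `x_p v ∈ ℤ_p²` for
every `p`. So it suffices to find for each `p` a matrix `y_p ∈ M₂(ℤ_p)` with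
`A_p = {v : y_p v ∈ ℤ_p²}`: take one whose rows span the `ℤ_p`-module of all `r ∈ ℤ_p²` with
`r · A_p ⊆ ℤ_p` (a submodule of `ℤ_p²`, and `ℤ_p` is a PID). That this dual cuts out exactly
`A_p` is a separation statement: characters of the finite groups `p⁻ⁿℤ² / (A ∩ p⁻ⁿℤ²)` give
integral separating vectors at each level `n`, and compactness of `ℤ_p²` yields one vector that
works at all levels at once.
-/

theorem AddSubgroup.mem_iff_forall_ordCompl_nsmul_mem {G : Type*} [AddCommGroup G]
    (A : AddSubgroup G) {N : ℕ} (hN : N ≠ 0) {w : G} :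
    w ∈ A ↔ ∀ p : ℕ, p.Prime → ordCompl[p] N • w ∈ A := by
  refine ⟨fun hw p _ => A.nsmul_mem hw _, fun h => ?_⟩
  -- the order of `w` in `G ⧸ A` divides every `ordCompl[p] N`, so it has no prime factor
  rw [← QuotientAddGroup.eq_zero_iff, ← AddMonoid.addOrderOf_eq_one_iff]
  by_contra hne
  obtain ⟨p, hp, hdvd⟩ := Nat.exists_prime_and_dvd hne
  refine Nat.not_dvd_ordCompl hp hN (hdvd.trans (addOrderOf_dvd_of_nsmul_eq_zero ?_))
  rw [← QuotientAddGroup.mk_nsmul, QuotientAddGroup.eq_zero_iff]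
  exact h p hp

theorem AddSubgroup.natCast_inv_smul_mem_iff {V : Type*} [AddCommGroup V] [Module ℚ V]
    (A : AddSubgroup V) {N : ℕ} (hN : N ≠ 0) (v : V) :
    (N : ℚ)⁻¹ • v ∈ A ↔ ∀ p : Nat.Primes, ((p : ℚ) ^ N.factorization p)⁻¹ • v ∈ A := by
  have key : ∀ p : ℕ, ordCompl[p] N • (N : ℚ)⁻¹ • v = ((p : ℚ) ^ N.factorization p)⁻¹ • v := by
    intro p
    have hc : ordCompl[p] N ≠ 0 := (Nat.ordCompl_pos p hN).ne'
    have hNc := Nat.ordProj_mul_ordCompl_eq_self N p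
    generalize ordCompl[p] N = c at hc hNc ⊢
    generalize N.factorization p = f at hNc ⊢
    subst hNc
    rw [← Nat.cast_smul_eq_nsmul ℚ, smul_smul]
    congr 1
    push_cast
    field_simp
  rw [A.mem_iff_forall_ordCompl_nsmul_mem hN]
  exact ⟨fun h p => key p ▸ h p p.2, fun h p hp => key p ▸ h ⟨p, hp⟩⟩

theorem exists_eq_natCast_inv_smul_intCast {ι : Type*} [Fintype ι] (v : ι → ℚ) :
    ∃ N : ℕ, N ≠ 0 ∧ ∃ a : ι → ℤ, v = (N : ℚ)⁻¹ • (Int.cast ∘ a : ι → ℚ) := by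
  refine ⟨∏ i, (v i).den, Finset.prod_ne_zero_iff.mpr fun i _ => (v i).den_nz,
    fun i => (v i).num * ((∏ j, (v j).den) / (v i).den : ℕ), funext fun i => ?_⟩
  obtain ⟨k, hk⟩ := Finset.dvd_prod_of_mem (fun j => (v j).den) (Finset.mem_univ i)
  have hk0 : (k : ℚ) ≠ 0 := by
    have := Finset.prod_ne_zero_iff.mpr fun j (_ : j ∈ Finset.univ) => (v j).den_nz
    rw [hk] at this
    exact_mod_cast right_ne_zero_of_mul this
  simp only [hk, Pi.smul_apply, Function.comp_apply, smul_eq_mul,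
    Nat.mul_div_cancel_left _ (v i).den_pos]
  push_cast
  conv_lhs => rw [← Rat.num_div_den (v i)]
  field_simp

theorem Submodule.exists_matrix_span_range_eq {R : Type*} [CommRing R] [IsDomain R]
    [IsPrincipalIdealRing R] {ι : Type*} [Fintype ι] (T : Submodule R (ι → R)) :
    ∃ y : Matrix ι ι R, span R (Set.range y) = T := by
  classical
  obtain ⟨n, snf⟩ := T.smithNormalForm (Pi.basisFun R ι)
  have hT : span R (Set.range fun k => (snf.bN k : ι → R)) = T := by
    rw [Set.range_comp' Subtype.val snf.bN, ← T.coe_subtype, ← map_span, snf.bN.span_eq, map_top,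
      range_subtype]
  refine ⟨Function.extend snf.f (fun k => (snf.bN k : ι → R)) 0, le_antisymm ?_ ?_⟩
  · rw [span_le]
    rintro _ ⟨i, rfl⟩
    by_cases h : ∃ k, snf.f k = i
    · obtain ⟨k, rfl⟩ := h
      rw [snf.f.injective.extend_apply]
      exact (snf.bN k).2
    · rw [Function.extend_apply' _ _ _ h]
      exact T.zero_mem
  · refine hT.ge.trans (span_mono ?_)
    rintro _ ⟨k, rfl⟩
    exact ⟨snf.f k, snf.f.injective.extend_apply _ _ _⟩

namespace PadicInt

variable {p : ℕ} [Fact p.Prime]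

theorem natCast_dvd_iff_ordProj_dvd {N : ℕ} (hN : N ≠ 0) {z : ℤ_[p]} :
    (N : ℤ_[p]) ∣ z ↔ ((ordProj[p] N : ℕ) : ℤ_[p]) ∣ z := by
  have hunit : IsUnit ((ordCompl[p] N : ℕ) : ℤ_[p]) := by
    rw [isUnit_iff, norm_natCast_eq_one_iff]
    exact Nat.coprime_ordCompl Fact.out hN
  conv_lhs => rw [← Nat.ordProj_mul_ordCompl_eq_self N p, Nat.cast_mul]
  exact hunit.mul_right_dvd

theorem isClopen_setOf_pow_dvd (e : ℕ) : IsClopen {z : ℤ_[p] | (p : ℤ_[p]) ^ e ∣ z} := by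
  have h : {z : ℤ_[p] | (p : ℤ_[p]) ^ e ∣ z} = {z | ‖z‖ ≤ (p : ℝ) ^ (-e : ℤ)} := by
    ext z
    simp only [Set.mem_ofPred_eq, norm_le_pow_iff_mem_span_pow, Ideal.mem_span_singleton]
  rw [h]
  refine ⟨isClosed_le continuous_norm continuous_const, ?_⟩
  simp_rw [norm_le_pow_iff_norm_lt_pow_add_one]
  exact isOpen_lt continuous_norm continuous_const

end PadicInt

theorem Int.cast_dotProduct {R : Type*} [Ring R] {ι : Type*} [Fintype ι] (v w : ι → ℤ) :
    ((v ⬝ᵥ w : ℤ) : R) = (Int.cast ∘ v : ι → R) ⬝ᵥ (Int.cast ∘ w) :=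
  (Int.castRingHom R).map_dotProduct v w

theorem AddCircle.coe_intCast_div_eq_zero_iff {N : ℕ} (hN : N ≠ 0) (m : ℤ) :
    (((m / N : ℚ)) : AddCircle (1 : ℚ)) = 0 ↔ (N : ℤ) ∣ m := by
  rw [AddCircle.coe_eq_zero_iff]
  have hN' : (N : ℚ) ≠ 0 := by exact_mod_cast hN
  constructor
  · rintro ⟨n, hn⟩
    refine ⟨n, ?_⟩
    rw [zsmul_one, eq_div_iff hN'] at hn
    exact_mod_cast hn.symm.trans (mul_comm _ _)
  · rintro ⟨n, rfl⟩
    exact ⟨n, by rw [zsmul_one]; push_cast; field_simp⟩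

theorem AddSubgroup.exists_dvd_dotProduct_of_notMem {ι : Type*} [Fintype ι]
    {A : AddSubgroup (ι → ℚ)} (hA : ∀ n : ι → ℤ, (Int.cast ∘ n : ι → ℚ) ∈ A) {N : ℕ} (hN : N ≠ 0)
    {a : ι → ℤ} (ha : (N : ℚ)⁻¹ • (Int.cast ∘ a : ι → ℚ) ∉ A) :
    ∃ r : ι → ℤ, (∀ b : ι → ℤ, (N : ℚ)⁻¹ • (Int.cast ∘ b : ι → ℚ) ∈ A → (N : ℤ) ∣ r ⬝ᵥ b) ∧
      ¬ (N : ℤ) ∣ r ⬝ᵥ a := by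
  classical
  obtain ⟨χ, hχ⟩ := CharacterModule.exists_character_apply_ne_zero_of_ne_zero
    (a := (QuotientAddGroup.mk _ : (ι → ℚ) ⧸ A)) (mt (QuotientAddGroup.eq_zero_iff _).mp ha)
  set e : ι → ((ι → ℚ) ⧸ A) := fun j => QuotientAddGroup.mk ((N : ℚ)⁻¹ • Pi.single j 1)
  -- `N • e j = 0`, so `χ (e j)` is a point `r j / N` of `ℚ / ℤ`
  have hr : ∀ j, ∃ r : ℤ, χ (e j) = ((r / N : ℚ) : AddCircle (1 : ℚ)) := by
    intro j
    obtain ⟨q, hq⟩ := QuotientAddGroup.mk_surjective (χ (e j))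
    have hNe : N • e j = 0 := by
      rw [← QuotientAddGroup.mk_nsmul, QuotientAddGroup.eq_zero_iff, ← Nat.cast_smul_eq_nsmul ℚ,
        smul_smul, mul_inv_cancel₀ (by exact_mod_cast hN), one_smul]
      convert hA (Pi.single j 1) using 1
      funext i
      by_cases h : i = j <;> simp [h]
    have := congrArg χ hNe
    rw [map_nsmul, map_zero, ← hq, ← QuotientAddGroup.mk_nsmul, AddCircle.coe_eq_zero_iff] at this
    obtain ⟨n, hn⟩ := this
    refine ⟨n, ?_⟩
    rw [← hq]
    congr 1
    rw [zsmul_one, nsmul_eq_mul] at hn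
    rw [hn]
    field_simp
  choose r hr using hr
  have hχb : ∀ b : ι → ℤ, χ (QuotientAddGroup.mk ((N : ℚ)⁻¹ • (Int.cast ∘ b : ι → ℚ))) =
      (((r ⬝ᵥ b : ℤ) / N : ℚ) : AddCircle (1 : ℚ)) := by
    intro b
    have : (N : ℚ)⁻¹ • (Int.cast ∘ b : ι → ℚ) = ∑ j, b j • ((N : ℚ)⁻¹ • Pi.single j 1) := by
      funext i
      simp [Finset.sum_apply, Pi.single_apply]
    rw [this, QuotientAddGroup.mk_sum, map_sum]
    simp only [QuotientAddGroup.mk_zsmul, map_zsmul]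
    change ∑ j, b j • χ (e j) = _
    simp only [hr, dotProduct, Int.cast_sum, Int.cast_mul, Finset.sum_div]
    simp only [← QuotientAddGroup.mk_zsmul, ← QuotientAddGroup.mk_sum, zsmul_eq_mul]
    congr 1
    exact Finset.sum_congr rfl fun j _ => by ring
  refine ⟨r, fun b hb => ?_, fun h => hχ ?_⟩
  · rw [← AddCircle.coe_intCast_div_eq_zero_iff hN, ← hχb, (QuotientAddGroup.eq_zero_iff _).mpr hb,
      map_zero]
  · rw [hχb, AddCircle.coe_intCast_div_eq_zero_iff hN]
    exact h

namespace AddSubgroup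

variable {p : ℕ} [Fact p.Prime] {ι : Type*} [Fintype ι]

def padicDualLevel (A : AddSubgroup (ι → ℚ)) (p : ℕ) [Fact p.Prime] (e : ℕ) :
    Submodule ℤ_[p] (ι → ℤ_[p]) :=
  ⨅ (a : ι → ℤ) (_ : ((p : ℚ) ^ e)⁻¹ • (Int.cast ∘ a : ι → ℚ) ∈ A),
    Submodule.comap (dotProductBilin ℤ_[p] ℤ_[p] (Int.cast ∘ a)) (Ideal.span {(p : ℤ_[p]) ^ e})

def padicDual (A : AddSubgroup (ι → ℚ)) (p : ℕ) [Fact p.Prime] :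
    Submodule ℤ_[p] (ι → ℤ_[p]) :=
  ⨅ e, A.padicDualLevel p e

variable {A : AddSubgroup (ι → ℚ)}

theorem mem_padicDualLevel {e : ℕ} {r : ι → ℤ_[p]} :
    r ∈ A.padicDualLevel p e ↔ ∀ a : ι → ℤ, ((p : ℚ) ^ e)⁻¹ • (Int.cast ∘ a : ι → ℚ) ∈ A →
      (p : ℤ_[p]) ^ e ∣ (Int.cast ∘ a) ⬝ᵥ r := by
  simp [padicDualLevel, Submodule.mem_iInf, Ideal.mem_span_singleton]

theorem padicDualLevel_antitone : Antitone (A.padicDualLevel p) := by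
  intro e e' hle r hr
  obtain ⟨k, rfl⟩ := Nat.exists_eq_add_of_le hle
  rw [mem_padicDualLevel] at hr ⊢
  intro a ha
  have hpk : (p : ℤ_[p]) ^ k ≠ 0 := pow_ne_zero _ (Nat.cast_ne_zero.mpr (Fact.out : p.Prime).ne_zero)
  have hp : (p : ℚ) ≠ 0 := Nat.cast_ne_zero.mpr (Fact.out : p.Prime).ne_zero
  have h := hr ((p : ℤ) ^ k • a) (by
    convert ha using 1
    funext i
    simp only [Pi.smul_apply, Function.comp_apply, smul_eq_mul]
    push_cast
    field_simp
    ring)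
  rw [← mul_dvd_mul_iff_right hpk, ← pow_add]
  convert h using 1
  simp only [dotProduct, Function.comp_apply, Pi.smul_apply, smul_eq_mul, Int.cast_mul,
    Int.cast_pow, Int.cast_natCast, Finset.sum_mul]
  exact Finset.sum_congr rfl fun i _ => by ring

theorem isClosed_padicDualLevel (e : ℕ) : IsClosed (A.padicDualLevel p e : Set (ι → ℤ_[p])) := by
  have h : (A.padicDualLevel p e : Set (ι → ℤ_[p])) =
      ⋂ (a : ι → ℤ) (_ : ((p : ℚ) ^ e)⁻¹ • (Int.cast ∘ a : ι → ℚ) ∈ A),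
        (fun r => (Int.cast ∘ a) ⬝ᵥ r) ⁻¹' {z | (p : ℤ_[p]) ^ e ∣ z} := by
    ext r
    simp [mem_padicDualLevel]
  rw [h]
  exact isClosed_biInter fun a _ =>
    (PadicInt.isClopen_setOf_pow_dvd e).isClosed.preimage (continuous_const.dotProduct continuous_id)

theorem exists_mem_padicDual_not_dvd (hA : ∀ n : ι → ℤ, (Int.cast ∘ n : ι → ℚ) ∈ A) {e : ℕ}
    {a : ι → ℤ} (ha : ((p : ℚ) ^ e)⁻¹ • (Int.cast ∘ a : ι → ℚ) ∉ A) :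
    ∃ r ∈ A.padicDual p, ¬ (p : ℤ_[p]) ^ e ∣ (Int.cast ∘ a) ⬝ᵥ r := by
  have hp : p ≠ 0 := (Fact.out : p.Prime).ne_zero
  -- Separating vectors exist at each finite level `e + m`; by compactness of `ℤ_[p]^ι` one of
  -- them works at all levels.
  set t : ℕ → Set (ι → ℤ_[p]) := fun m =>
    (A.padicDualLevel p (e + m) : Set _) ∩ {r | ¬ (p : ℤ_[p]) ^ e ∣ (Int.cast ∘ a) ⬝ᵥ r}
  have ht_closed : ∀ m, IsClosed (t m) := fun m =>
    (isClosed_padicDualLevel _).inter ((PadicInt.isClopen_setOf_pow_dvd e).compl.isClosed.preimage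
      (continuous_const.dotProduct continuous_id))
  have ht_nonempty : ∀ m, (t m).Nonempty := by
    intro m
    have hv : ((p ^ (e + m) : ℕ) : ℚ)⁻¹ • (Int.cast ∘ ((p : ℤ) ^ m • a) : ι → ℚ) =
        ((p : ℚ) ^ e)⁻¹ • (Int.cast ∘ a : ι → ℚ) := by
      funext i
      simp only [Pi.smul_apply, Function.comp_apply, smul_eq_mul]
      push_cast
      field_simp
      ring
    obtain ⟨r, hr, hra⟩ := exists_dvd_dotProduct_of_notMem hA (pow_ne_zero (e + m) hp)
      (hv ▸ ha)
    refine ⟨Int.cast ∘ r, mem_padicDualLevel.mpr fun b hb => ?_, fun h => hra ?_⟩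
    · have := hr b (by push_cast; exact hb)
      rw [dotProduct_comm, ← Int.cast_dotProduct, PadicInt.pow_p_dvd_int_iff]
      exact_mod_cast this
    · rw [← Int.cast_dotProduct, PadicInt.pow_p_dvd_int_iff] at h
      obtain ⟨c, hc⟩ := h
      exact ⟨c, by rw [dotProduct_smul, dotProduct_comm, hc, smul_eq_mul]; push_cast; ring⟩
  obtain ⟨r, hr⟩ := IsCompact.nonempty_iInter_of_sequence_nonempty_isCompact_isClosed t
    (fun m => Set.inter_subset_inter_left _ (padicDualLevel_antitone (by omega))) ht_nonempty
    (ht_closed 0).isCompact ht_closed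
  rw [Set.mem_iInter] at hr
  exact ⟨r, Submodule.mem_iInf _ |>.mpr fun l =>
    padicDualLevel_antitone (Nat.le_add_left l e) (hr l).1, (hr 0).2⟩

theorem exists_padicInt_matrix (hA : ∀ n : ι → ℤ, (Int.cast ∘ n : ι → ℚ) ∈ A) :
    ∃ y : Matrix ι ι ℤ_[p], ∀ (e : ℕ) (a : ι → ℤ),
      ((p : ℚ) ^ e)⁻¹ • (Int.cast ∘ a : ι → ℚ) ∈ A ↔
        ∀ i, (p : ℤ_[p]) ^ e ∣ (y *ᵥ (Int.cast ∘ a)) i := by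
  obtain ⟨y, hy⟩ := (A.padicDual p).exists_matrix_span_range_eq
  refine ⟨y, fun e a => ⟨fun ha i => ?_, fun h => by_contra fun ha => ?_⟩⟩
  · have hyi : y i ∈ A.padicDual p := hy ▸ Submodule.subset_span ⟨i, rfl⟩
    rw [mulVec, dotProduct_comm]
    exact mem_padicDualLevel.mp (Submodule.mem_iInf _ |>.mp hyi e) a ha
  · obtain ⟨r, hr, hndvd⟩ := exists_mem_padicDual_not_dvd hA ha
    have hspan : Submodule.span ℤ_[p] (Set.range y) ≤ Submodule.comap
        (dotProductBilin ℤ_[p] ℤ_[p] (Int.cast ∘ a)) (Ideal.span {(p : ℤ_[p]) ^ e}) := by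
      rw [Submodule.span_le]
      rintro _ ⟨i, rfl⟩
      simpa [Ideal.mem_span_singleton, mulVec, dotProduct_comm] using h i
    rw [← hy] at hr
    exact hndvd (by simpa [Ideal.mem_span_singleton] using hspan hr)

end AddSubgroup

def toPadic (q : Nat.Primes) : AF →+* ℚ_[q] :=
  (Algebra.TensorProduct.productMap
    ((PadicInt.Coe.ringHom.comp (Pi.evalRingHom _ q)).toIntAlgHom)
    ((Rat.castHom ℚ_[q]).toIntAlgHom)).toRingHom

@[simp]
theorem toPadic_iZ (q : Nat.Primes) (z : ZHat) : toPadic q (iZ z) = z q := by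
  simp [toPadic, iZ]
  rfl

@[simp]
theorem toPadic_iQ (q : Nat.Primes) (r : ℚ) : toPadic q (iQ r) = r := by
  simp [toPadic, iQ]

theorem iZ_mul_iQ_inv_mem_range_iff (z : ZHat) {N : ℕ} (hN : N ≠ 0) :
    iZ z * iQ (N : ℚ)⁻¹ ∈ iZ.range ↔ ∀ q : Nat.Primes, (N : ℤ_[q]) ∣ z q := by
  constructor
  · rintro ⟨w, hw⟩ q
    have h := congrArg (toPadic q) hw
    simp only [map_mul, toPadic_iZ, toPadic_iQ] at h
    refine ⟨w q, Subtype.coe_injective ?_⟩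
    have : (N : ℚ_[q]) ≠ 0 := by exact_mod_cast hN
    push_cast at h ⊢
    rw [h]
    field_simp
  · intro h
    choose w hw using h
    refine ⟨w, ?_⟩
    have hz : z = N * w := funext hw
    have hN' : (N : ℚ) ≠ 0 := by exact_mod_cast hN
    rw [hz, map_mul, map_natCast, ← map_natCast iQ, mul_comm (iQ _), mul_assoc, ← map_mul,
      mul_inv_cancel₀ hN', map_one, mul_one]

theorem mulVec_map_iZ_iQ {ι : Type*} [Fintype ι] (x : Matrix ι ι ZHat) (N : ℕ) (a : ι → ℤ) :
    (x.map iZ) *ᵥ (fun j => iQ (((N : ℚ)⁻¹ • (Int.cast ∘ a : ι → ℚ)) j)) =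
      fun i => iZ ((x *ᵥ (Int.cast ∘ a)) i) * iQ (N : ℚ)⁻¹ := by
  funext i
  simp only [mulVec, dotProduct, map_sum, Finset.sum_mul, Matrix.map_apply, Pi.smul_apply,
    Function.comp_apply, smul_eq_mul, map_mul, map_intCast]
  exact Finset.sum_congr rfl fun j _ => by ring

theorem mem_Ax_iff (x : Matrix (Fin 2) (Fin 2) ZHat) {N : ℕ} (hN : N ≠ 0) (a : Fin 2 → ℤ) :
    (N : ℚ)⁻¹ • (Int.cast ∘ a : Fin 2 → ℚ) ∈ Ax x ↔
      ∀ (i : Fin 2) (q : Nat.Primes), (N : ℤ_[q]) ∣ (x *ᵥ (Int.cast ∘ a)) i q := by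
  change (∀ i, _ ∈ iZ.range) ↔ _
  simp only [mulVec_map_iZ_iQ, iZ_mul_iQ_inv_mem_range_iff _ hN]

/-- every additive subgroup `A` with `ℤ² ⊆ A ⊆ ℚ²` is of the form
`A_x = {v ∈ ℚ² : x·v ∈ Ẑ²}` for some 2×2 matrix `x` over the profinite integers. -/
theorem exists_matrix_realizing_subgroup (A : AddSubgroup (Fin 2 → ℚ))
    (hA : ∀ n : Fin 2 → ℤ, (fun i => (n i : ℚ)) ∈ A) :
    ∃ x : Matrix (Fin 2) (Fin 2) ZHat, A = Ax x := by
  choose y hy using fun q : Nat.Primes => A.exists_padicInt_matrix (p := q) hA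
  refine ⟨Matrix.of fun i j q => y q i j, AddSubgroup.ext fun v => ?_⟩
  obtain ⟨N, hN, a, rfl⟩ := exists_eq_natCast_inv_smul_intCast v
  have hcoord : ∀ i (q : Nat.Primes),
      (Matrix.of (fun i j q => y q i j) *ᵥ (Int.cast ∘ a)) i q = (y q *ᵥ (Int.cast ∘ a)) i := by
    intro i q
    simp [mulVec, dotProduct]
  rw [mem_Ax_iff _ hN, A.natCast_inv_smul_mem_iff hN, forall_comm]
  refine forall_congr' fun q => ?_
  rw [hy q]
  refine forall_congr' fun i => ?_
  rw [PadicInt.natCast_dvd_iff_ordProj_dvd hN, Nat.cast_pow, hcoord]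
end
end

section
/- Let M be a cancellative monoid (both left and right cancellative) and let θ, ζ be monoid automorphisms of M. Then the restriction functors θ* and ζ* on the category of left M-sets are naturally isomorphic if and only if θ and ζ differ by an inner automorphism, i.e. there exists a unit g ∈ M^× with ζ(m) = g·θ(m)·g⁻¹ for all m ∈ M. -/
/-!
STATEMENT 9: for a cancellative monoid `M` and monoid automorphisms `θ, ζ` of `M`,
the restriction functors `θ*` and `ζ*` on the category of left `M`-sets are
naturally isomorphic iff `θ` and `ζ` differ by an inner automorphism, i.e.
`ζ(m) = g·θ(m)·g⁻¹` for some unit `g ∈ M^×`.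
-/

open CategoryTheory

universe u

theorem res_iso_iff_differ_by_inner (M : Type u) [CancelMonoid M] (θ ζ : M ≃* M) :
    Nonempty (Action.res (Type u) θ.toMonoidHom ≅
        Action.res (Type u) ζ.toMonoidHom) ↔
      ∃ g : Mˣ, ∀ m : M, ζ m = (g : M) * θ m * ((g⁻¹ : Mˣ) : M) := by
  have comp_eq : ∀ (X : Action (Type u) M) (a b : M),
      X.ρ a ≫ X.ρ b = X.ρ (b * a) := fun X a b => (map_mul X.ρ b a).symm
  constructor
  · rintro ⟨η⟩
    let A : Action (Type u) M := Action.ofMulAction M M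
    let φ : M → M := (η.hom.app A).hom
    let ψ : M → M := (η.inv.app A).hom
    let r : M → (A ⟶ A) := fun x =>
      { hom := TypeCat.ofHom (fun n : M => n * x)
        comm := fun m => ConcreteCategory.hom_ext _ _ fun n : M => mul_assoc m n x }
    have hnat : ∀ x n : M, φ (n * x) = φ n * x := fun x n =>
      types_congr_hom (congrArg Action.Hom.hom (η.hom.naturality (r x))) n
    have hnat' : ∀ x n : M, ψ (n * x) = ψ n * x := fun x n =>
      types_congr_hom (congrArg Action.Hom.hom (η.inv.naturality (r x))) n
    have hequiv : ∀ m n : M, φ (θ m * n) = ζ m * φ n := fun m n =>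
      types_congr_hom ((η.hom.app A).comm m) n
    have hψφ : ∀ n : M, ψ (φ n) = n := fun n =>
      types_congr_hom (congrArg Action.Hom.hom (η.hom_inv_id_app A)) n
    have hφψ : ∀ n : M, φ (ψ n) = n := fun n =>
      types_congr_hom (congrArg Action.Hom.hom (η.inv_hom_id_app A)) n
    have hφ : ∀ n : M, φ n = φ 1 * n := fun n => by
      have := hnat n 1; rwa [one_mul] at this
    have hψ : ∀ n : M, ψ n = ψ 1 * n := fun n => by
      have := hnat' n 1; rwa [one_mul] at this
    have h1 : φ 1 * ψ 1 = 1 := by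
      have := hφψ 1
      rwa [hψ 1, mul_one, hφ (ψ 1)] at this
    have h2 : ψ 1 * φ 1 = 1 := by
      have := hψφ 1
      rwa [hφ 1, mul_one, hψ (φ 1)] at this
    refine ⟨⟨φ 1, ψ 1, h1, h2⟩, fun m => ?_⟩
    have key : φ 1 * θ m = ζ m * φ 1 := by
      have := hequiv m 1
      rwa [mul_one, hφ (θ m)] at this
    show ζ m = φ 1 * θ m * ψ 1
    rw [key, mul_assoc, h1, mul_one]
  · rintro ⟨g, hg⟩
    have key : ∀ m : M, (g : M) * θ m = ζ m * (g : M) := by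
      intro m
      rw [hg m, mul_assoc, Units.inv_mul, mul_one]
    have key' : ∀ m : M, ((g⁻¹ : Mˣ) : M) * ζ m = θ m * ((g⁻¹ : Mˣ) : M) := by
      intro m
      calc ((g⁻¹ : Mˣ) : M) * ζ m
          = ((g⁻¹ : Mˣ) : M) * ζ m * ((g : M) * ((g⁻¹ : Mˣ) : M)) := by
            rw [Units.mul_inv, mul_one]
        _ = ((g⁻¹ : Mˣ) : M) * (ζ m * (g : M)) * ((g⁻¹ : Mˣ) : M) := by
            simp [mul_assoc]
        _ = ((g⁻¹ : Mˣ) : M) * ((g : M) * θ m) * ((g⁻¹ : Mˣ) : M) := by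
            rw [key m]
        _ = θ m * ((g⁻¹ : Mˣ) : M) := by
            rw [← mul_assoc, Units.inv_mul, one_mul]
    refine ⟨NatIso.ofComponents (fun X => ?_) ?_⟩
    · refine
        { hom := { hom := X.ρ (g : M), comm := fun m => ?_ }
          inv := { hom := X.ρ ((g⁻¹ : Mˣ) : M), comm := fun m => ?_ }
          hom_inv_id := ?_
          inv_hom_id := ?_ }
      · show X.ρ (θ m) ≫ X.ρ (g : M) = X.ρ (g : M) ≫ X.ρ (ζ m)
        rw [comp_eq, comp_eq, key m]
      · show X.ρ (ζ m) ≫ X.ρ ((g⁻¹ : Mˣ) : M) = X.ρ ((g⁻¹ : Mˣ) : M) ≫ X.ρ (θ m)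
        rw [comp_eq, comp_eq, key' m]
      · ext1
        show X.ρ (g : M) ≫ X.ρ ((g⁻¹ : Mˣ) : M) = _
        rw [comp_eq]
        have : ((g⁻¹ : Mˣ) : M) * (g : M) = 1 := Units.inv_mul g
        rw [this, map_one]
        rfl
      · ext1
        show X.ρ ((g⁻¹ : Mˣ) : M) ≫ X.ρ (g : M) = _
        rw [comp_eq]
        have : (g : M) * ((g⁻¹ : Mˣ) : M) = 1 := Units.mul_inv g
        rw [this, map_one]
        rfl
    · intro X Y f
      ext
      exact (types_congr_hom (f.comm (g : M)) _).symm
end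

section
/- Let Θ be an equivalence from the category of left M₂ⁿˢ(ℤ)-sets to itself. Then G∘Θ is naturally isomorphic to G, where G is the forgetful functor to Set. -/
noncomputable section
open Matrix

/-- 2×2 integer matrices. -/
abbrev M2Z : Type := Matrix (Fin 2) (Fin 2) ℤ

/-- The multiplicative monoid `M₂ⁿˢ(ℤ)` of 2×2 integer matrices with nonzero determinant. -/
def Mns : Submonoid M2Z where
  carrier := {a | a.det ≠ 0}
  one_mem' := by simp
  mul_mem' := by
    intro a b ha hb
    simp only [Set.mem_setOf_eq, Matrix.det_mul] at *
    exact mul_ne_zero ha hb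

open CategoryTheory

/-!
The forgetful functor on `M`-sets is corepresented by the left regular action, so it suffices that
an equivalence `Θ` sends `M` to an object isomorphic to `M`. As `Θ M` is a separator, `1` lies in
the image of some `u : Θ M ⟶ M`, and the orbit map `s` of a preimage of `1` is a section of `u`.
Then `u ≫ s` is an idempotent endomorphism of `Θ M`, so it comes from one of `M`, that is, from
right multiplication by an idempotent of `M`. In `M₂ⁿˢ(ℤ)` the only idempotent is `1`, because an
idempotent of nonzero determinant has determinant `1` and is thus invertible.
-/

universe u

namespace Action

variable {M : Type u} [Monoid M]

lemma hom_ρ_apply {X Y : Action (Type u) M} (f : X ⟶ Y) (m : M) (x : X.V) :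
    f.hom (X.ρ m x) = Y.ρ m (f.hom x) :=
  ConcreteCategory.congr_hom (f.comm m) x

lemma ρ_one_apply (X : Action (Type u) M) (x : X.V) : X.ρ 1 x = x := by
  rw [ρ_one]; rfl

lemma ρ_mul_apply (X : Action (Type u) M) (m n : M) (x : X.V) :
    X.ρ (m * n) x = X.ρ m (X.ρ n x) := by
  rw [map_mul]; rfl

def leftRegularHomEquiv (X : Action (Type u) M) : (leftRegular M ⟶ X) ≃ X.V where
  toFun f := f.hom (1 : M)
  invFun x :=
    { hom := TypeCat.ofHom fun m => X.ρ m x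
      comm := fun m => by ext n; exact ρ_mul_apply X m n x }
  left_inv f := by
    ext (m : M)
    change X.ρ m (f.hom (1 : M)) = f.hom m
    conv_rhs => rw [← mul_one m]
    exact (hom_ρ_apply f m (1 : M)).symm
  right_inv x := by simp

lemma leftRegular_hom_ext {X : Action (Type u) M} {f g : leftRegular M ⟶ X}
    (h : f.hom (1 : M) = g.hom (1 : M)) : f = g :=
  (leftRegularHomEquiv X).injective h

def coyonedaLeftRegularIsoForget :
    coyoneda.obj (Opposite.op (leftRegular M)) ≅ forget (Type u) M :=
  NatIso.ofComponents (fun X => (leftRegularHomEquiv X).toIso) fun _ => rfl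

lemma isSeparator_leftRegular : IsSeparator (leftRegular M) := by
  refine (isSeparator_def _).2 fun X Y f g hfg => ?_
  ext x
  have h := congrArg (fun h => h.hom (1 : M)) (hfg ((leftRegularHomEquiv X).symm x))
  change f.hom (X.ρ 1 x) = g.hom (X.ρ 1 x) at h
  rwa [ρ_one_apply] at h

variable (M) in
def predicates : Action (Type u) M where
  V := M → Prop
  ρ :=
    { toFun m := TypeCat.ofHom fun p x => p (x * m)
      map_one' := ConcreteCategory.hom_ext _ _ fun p => funext fun x => by simp
      map_mul' m n :=
        ConcreteCategory.hom_ext _ _ fun p => funext fun x => by simp [mul_assoc] }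

lemma exists_hom_leftRegular_apply_eq_one_of_isSeparator {Q : Action (Type u) M}
    (hQ : IsSeparator Q) : ∃ (u : Q ⟶ leftRegular M) (b : Q.V), u.hom b = (1 : M) := by
  let S : M → Prop := fun a => ∃ (u : Q ⟶ leftRegular M) (b : Q.V), u.hom b = a
  -- `S` is a left ideal, so its orbit map in `predicates M` agrees with that of `⊤` on every image
  -- of `Q`; at `1` this says `1 ∈ S`.
  have key : (leftRegularHomEquiv (predicates M)).symm S =
      (leftRegularHomEquiv (predicates M)).symm fun _ => True := by
    refine (isSeparator_def _).1 hQ _ _ fun u => ?_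
    ext b
    funext x
    change S (x * show M from u.hom b) = True
    exact eq_true ⟨u, Q.ρ x b, hom_ρ_apply u x b⟩
  have h1 := congrFun (congrArg (fun f => f.hom (1 : M)) key) 1
  change S (1 * 1) = True at h1
  rw [mul_one] at h1
  exact of_eq_true h1

lemma leftRegular_endo_hom_apply (f : leftRegular M ⟶ leftRegular M) (m : M) :
    f.hom m = m * show M from f.hom (1 : M) := by
  conv_lhs => rw [← mul_one m]
  exact hom_ρ_apply f m (1 : M)

lemma leftRegular_endo_eq_id_of_idempotent (hM : ∀ e : M, IsIdempotentElem e → e = 1)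
    {f : leftRegular M ⟶ leftRegular M} (hf : f ≫ f = f) : f = 𝟙 _ := by
  refine leftRegular_hom_ext (hM _ ?_)
  have h := congrArg (fun g => g.hom (1 : M)) hf
  change f.hom (f.hom (1 : M)) = f.hom (1 : M) at h
  rwa [leftRegular_endo_hom_apply f (f.hom (1 : M))] at h

variable {N : Type u} [Monoid N]

lemma nonempty_obj_leftRegular_iso (hM : ∀ e : M, IsIdempotentElem e → e = 1)
    (Θ : Action (Type u) M ⥤ Action (Type u) N) [Θ.IsEquivalence] :
    Nonempty (Θ.obj (leftRegular M) ≅ leftRegular N) := by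
  have hsep : IsSeparator (Θ.obj (leftRegular M)) :=
    isSeparator_leftRegular.of_equivalence Θ.asEquivalence
  obtain ⟨u, b, hub⟩ := exists_hom_leftRegular_apply_eq_one_of_isSeparator hsep
  let s := (leftRegularHomEquiv _).symm b
  have hsu : s ≫ u = 𝟙 _ := by
    refine leftRegular_hom_ext ?_
    change u.hom (Θ.obj (leftRegular M) |>.ρ 1 b) = (1 : N)
    rwa [ρ_one_apply]
  have hus : u ≫ s = 𝟙 _ := by
    have hidem : Θ.preimage (u ≫ s) ≫ Θ.preimage (u ≫ s) = Θ.preimage (u ≫ s) :=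
      Θ.map_injective (by simp [reassoc_of% hsu])
    rw [← Θ.map_preimage (u ≫ s), leftRegular_endo_eq_id_of_idempotent hM hidem, Θ.map_id]
  exact ⟨⟨u, s, hus, hsu⟩⟩

end Action

def CategoryTheory.Functor.FullyFaithful.compCoyonedaObjIso {C D : Type*} [Category C]
    [Category D] {F : C ⥤ D} (hF : F.FullyFaithful) {X : C} {Y : D} (e : F.obj X ≅ Y) :
    F ⋙ coyoneda.obj (Opposite.op Y) ≅ coyoneda.obj (Opposite.op X) :=
  NatIso.ofComponents (fun _ => (e.symm.homCongr (Iso.refl _)).trans hF.homEquiv.symm |>.toIso)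
    fun _ => by ext; exact hF.map_injective (by simp)

theorem Action.nonempty_comp_forget_iso_forget {M N : Type u} [Monoid M] [Monoid N]
    (hM : ∀ e : M, IsIdempotentElem e → e = 1)
    (Θ : Action (Type u) M ⥤ Action (Type u) N) [Θ.IsEquivalence] :
    Nonempty (Θ ⋙ forget (Type u) N ≅ forget (Type u) M) := by
  obtain ⟨e⟩ := nonempty_obj_leftRegular_iso hM Θ
  exact ⟨Functor.isoWhiskerLeft Θ coyonedaLeftRegularIsoForget.symm ≪≫
    (Functor.FullyFaithful.ofFullyFaithful Θ).compCoyonedaObjIso e ≪≫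
    coyonedaLeftRegularIsoForget⟩

lemma Matrix.eq_one_of_isIdempotentElem_of_det_ne_zero {n R : Type*} [Fintype n]
    [DecidableEq n] [CommRing R] [IsDomain R] {A : Matrix n n R} (hA : IsIdempotentElem A)
    (hdet : A.det ≠ 0) : A = 1 := by
  have hdet_one : A.det = 1 :=
    (IsIdempotentElem.iff_eq_zero_or_one.1 (hA.map detMonoidHom)).resolve_left hdet
  exact (IsIdempotentElem.iff_eq_one_of_isUnit
    ((isUnit_iff_isUnit_det A).2 (hdet_one ▸ isUnit_one))).1 hA

lemma Mns.eq_one_of_isIdempotentElem {e : Mns} (he : IsIdempotentElem e) : e = 1 :=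
  Subtype.ext (eq_one_of_isIdempotentElem_of_det_ne_zero (he.map Mns.subtype) e.2)

/-- every self-equivalence `Θ` of the category of left
`M₂ⁿˢ(ℤ)`-sets satisfies `G ∘ Θ ≅ G`, where `G` is the forgetful functor. -/
theorem equivalence_Mns_preserves_forget
    (Θ : Action (Type 0) (MonCat.of Mns) ⥤ Action (Type 0) (MonCat.of Mns))
    [Θ.IsEquivalence] :
    Nonempty (Θ ⋙ Action.forget (Type 0) (MonCat.of Mns) ≅
      Action.forget (Type 0) (MonCat.of Mns)) :=
  Action.nonempty_comp_forget_iso_forget (fun _ => Mns.eq_one_of_isIdempotentElem) Θ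
end
end

section
/- For every complex number s with Re(s) > 2, the zeta function of Conway's big picture satisfies ζ_𝔓(s) = Σ_{x ∈ 𝔓} |det x|^{−s} = ζ(s)·ζ(s−1)/ζ(2s), where the sum ranges over the classes of primitive matrices, |det x| denotes the (well-defined) absolute value of the determinant of any representative of the class x, and ζ is the Riemann zeta function. Equivalently, Σ_{n ≥ 1} P(n)·n^{−s} = ζ(s)ζ(s−1)/ζ(2s), where P(n) is the number of classes in 𝔓 whose representatives have determinant of absolute value n. -/
noncomputable section
open Matrix

/-- The equivalence relation on `M₂ⁿˢ(ℤ)` given by left multiplication by `GL₂(ℤ)`. -/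
def leftGL : Setoid Mns where
  r a b := ∃ u : M2Zˣ, (b : M2Z) = (u : M2Z) * (a : M2Z)
  iseqv := by
    constructor
    · intro a; exact ⟨1, by simp⟩
    · rintro a b ⟨u, h⟩
      refine ⟨u⁻¹, ?_⟩
      rw [h, ← mul_assoc, Units.inv_mul, one_mul]
    · rintro a b c ⟨u, h⟩ ⟨v, h'⟩
      exact ⟨v * u, by rw [h', h, Units.val_mul, mul_assoc]⟩

/-- The quotient `X = GL₂(ℤ)\M₂ⁿˢ(ℤ)`. -/
abbrev X : Type := Quotient leftGL

/-- A 2×2 integer matrix is primitive if the gcd of its four entries is `1`,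
i.e. every common divisor of the entries is a unit. -/
def IsPrimitive (a : M2Z) : Prop := ∀ d : ℤ, (∀ i j, d ∣ a i j) → IsUnit d

private lemma dvd_entries_mul (m c : M2Z) (d : ℤ) (h : ∀ i j, d ∣ c i j) :
    ∀ i j, d ∣ (m * c) i j := by
  intro i j
  rw [Matrix.mul_apply]
  exact Finset.dvd_sum fun k _ => (h k j).mul_left (m i k)

/-- Primitivity only depends on the class in `X = GL₂(ℤ)\M₂ⁿˢ(ℤ)`. -/
def PrimClass : X → Prop :=
  Quotient.lift (fun a : Mns => _root_.IsPrimitive (a : M2Z))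
    (by
      rintro a b ⟨u, hu⟩
      have key : ∀ (v : M2Zˣ) (x y : Mns), (y : M2Z) = (v : M2Z) * (x : M2Z) →
          _root_.IsPrimitive (x : M2Z) → _root_.IsPrimitive (y : M2Z) := by
        intro v x y hy hx d hd
        refine hx d ?_
        have hx' : (x : M2Z) = ((v⁻¹ : M2Zˣ) : M2Z) * (y : M2Z) := by
          rw [hy, ← mul_assoc, Units.inv_mul, one_mul]
        intro i j
        rw [hx']
        exact dvd_entries_mul _ _ d hd i j
      have hu' : (a : M2Z) = ((u⁻¹ : M2Zˣ) : M2Z) * (b : M2Z) := by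
        rw [hu, ← mul_assoc, Units.inv_mul, one_mul]
      exact propext ⟨key u a b hu, key u⁻¹ b a hu'⟩)

/-- The absolute value of the determinant, well-defined on `X`. -/
def detAbs : X → ℕ :=
  Quotient.lift (fun a : Mns => (a : M2Z).det.natAbs)
    (by
      rintro a b ⟨u, hu⟩
      have h1 : IsUnit ((u : M2Z)).det := (Matrix.isUnit_iff_isUnit_det _).mp u.isUnit
      have h2 : ((u : M2Z)).det.natAbs = 1 := Int.isUnit_iff.mp h1 |>.elim
        (fun h => by rw [h]; rfl) (fun h => by rw [h]; rfl)
      have : (b : M2Z).det = ((u : M2Z)).det * (a : M2Z).det := by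
        rw [hu, Matrix.det_mul]
      show ((a : M2Z)).det.natAbs = ((b : M2Z)).det.natAbs
      rw [this, Int.natAbs_mul, h2, one_mul])


/-!
Every class in `X = GL₂(ℤ)\M₂ⁿˢ(ℤ)` contains exactly one Hermite normal form `!![a, b; 0, d]`
with `a, d > 0` and `0 ≤ b < d`: Bezout's identity and division with remainder give existence,
and a unimodular matrix relating two such forms must be the identity. The form has determinant
`a * d` and is primitive iff `gcd(a, b, d) = 1`. Summing `(a d)^(-s)` over all Hermite forms
gives `ζ(s) · Σ_d d · d^(-s) = ζ(s) ζ(s - 1)`, as there are `d` choices of `b`. On the other hand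
every Hermite form is uniquely `g` times a primitive one, with determinant multiplied by `g²`,
so the same sum factors as `ζ(2s) · ζ_𝔓(s)`.
-/

section DirichletSeries

variable {s : ℂ}

lemma summable_norm_pnat_cpow_neg (hs : 1 < s.re) :
    Summable fun n : ℕ+ => ‖((n : ℕ) : ℂ) ^ (-s)‖ := by
  refine (((Real.summable_nat_rpow (p := -s.re)).mpr (by linarith)).comp_injective
    PNat.coe_injective).congr fun n => ?_
  simp [Complex.norm_natCast_cpow_of_pos n.pos]

lemma tsum_pnat_cpow_neg (hs : 1 < s.re) : ∑' n : ℕ+, ((n : ℕ) : ℂ) ^ (-s) = riemannZeta s := by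
  rw [zeta_eq_tsum_one_div_nat_add_one_cpow hs,
    tsum_pnat_eq_tsum_succ (f := fun n => (n : ℂ) ^ (-s))]
  simp [Complex.cpow_neg]

lemma natCast_mul_cpow_neg {n : ℕ} (hn : n ≠ 0) (s : ℂ) :
    (n : ℂ) * (n : ℂ) ^ (-s) = (n : ℂ) ^ (-(s - 1)) := by
  rw [show -(s - 1) = 1 + -s by ring, Complex.cpow_add _ _ (Nat.cast_ne_zero.mpr hn),
    Complex.cpow_one]

lemma tsum_fin_cpow_neg (d : ℕ+) :
    ∑' _ : Fin d, ((d : ℕ) : ℂ) ^ (-s) = ((d : ℕ) : ℂ) ^ (-(s - 1)) := by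
  rw [tsum_fintype, Finset.sum_const, Finset.card_univ, Fintype.card_fin, nsmul_eq_mul,
    natCast_mul_cpow_neg d.ne_zero]

lemma summable_norm_sigma_fin_cpow_neg (hs : 2 < s.re) :
    Summable fun z : Σ d : ℕ+, Fin d => ‖((z.1 : ℕ) : ℂ) ^ (-s)‖ := by
  refine (summable_sigma_of_nonneg fun _ => norm_nonneg _).mpr
    ⟨fun _ => .of_finite, (summable_norm_pnat_cpow_neg (s := s - 1) ?_).congr fun d => ?_⟩
  · rw [Complex.sub_re, Complex.one_re]; linarith
  · dsimp only
    rw [← tsum_fin_cpow_neg, tsum_fintype, tsum_fintype, Finset.sum_const, Finset.sum_const,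
      nsmul_eq_mul, nsmul_eq_mul, norm_mul, Complex.norm_natCast]

lemma tsum_sigma_fin_cpow_neg (hs : 2 < s.re) :
    ∑' z : Σ d : ℕ+, Fin d, ((z.1 : ℕ) : ℂ) ^ (-s) = riemannZeta (s - 1) := by
  rw [(summable_norm_sigma_fin_cpow_neg hs).of_norm.tsum_sigma, tsum_congr tsum_fin_cpow_neg]
  exact tsum_pnat_cpow_neg (by rw [Complex.sub_re, Complex.one_re]; linarith)

lemma one_lt_re_two_mul (hs : 1 / 2 < s.re) : 1 < (2 * s).re := by
  simp only [Complex.mul_re, Complex.re_ofNat, Complex.im_ofNat, zero_mul, sub_zero]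
  linarith

end DirichletSeries

lemma exists_isUnit_mul_eq_upperTriangular (M : M2Z) (hM : M.det ≠ 0) :
    ∃ U : M2Z, IsUnit U ∧ ∃ (a : ℕ+) (b d : ℤ), U * M = !![(a : ℤ), b; 0, d] := by
  obtain ⟨p, q, r, t, rfl⟩ : ∃ p q r t, M = !![p, q; r, t] := ⟨_, _, _, _, M.eta_fin_two⟩
  have hg : 0 < Int.gcd p r := Int.gcd_pos_iff.mpr <| by
    contrapose! hM
    simp [Matrix.det_fin_two_of, hM.1, hM.2]
  obtain ⟨P, hP⟩ := Int.gcd_dvd_left p r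
  obtain ⟨R, hR⟩ := Int.gcd_dvd_right p r
  set g := Int.gcd p r
  set x := Int.gcdA p r
  set y := Int.gcdB p r
  have bezout : p * x + r * y = g := (Int.gcd_eq_gcd_ab p r).symm
  refine ⟨!![x, y; -R, P], ?_, ⟨_, hg⟩, x * q + y * t, -R * q + P * t, ?_⟩
  · have hdet : (g : ℤ) * (x * P + y * R) = g * 1 := by linear_combination bezout - x * hP - y * hR
    rw [Matrix.isUnit_iff_isUnit_det, Matrix.det_fin_two_of, mul_neg, sub_neg_eq_add,
      mul_left_cancel₀ (by positivity) hdet]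
    exact isUnit_one
  · have e00 : x * p + y * r = g := by linear_combination bezout
    have e10 : -R * p + P * r = 0 := by rw [hP, hR]; ring
    rw [Matrix.mul_fin_two, e00, e10, PNat.mk_coe]

/-- Encodes the Hermite normal form `!![a, b; 0, d]`. -/
@[ext]
structure Hermite where
  a : ℕ+
  d : ℕ+
  b : ℕ
  b_lt : b < d

namespace Hermite

def toMatrix (h : Hermite) : M2Z :=
  !![(h.a : ℤ), (h.b : ℤ); 0, (h.d : ℤ)]

def det (h : Hermite) : ℕ := h.a * h.d

lemma det_toMatrix (h : Hermite) : h.toMatrix.det = h.det := by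
  simp [toMatrix, det, Matrix.det_fin_two_of]

lemma toMatrix_mem_Mns (h : Hermite) : h.toMatrix ∈ Mns := by
  change h.toMatrix.det ≠ 0
  rw [det_toMatrix]
  exact Nat.cast_ne_zero.mpr (Nat.mul_pos h.a.pos h.d.pos).ne'

def toX (h : Hermite) : X := Quotient.mk leftGL ⟨h.toMatrix, h.toMatrix_mem_Mns⟩

lemma eq_of_toMatrix_eq_mul {h h' : Hermite} {U : M2Z} (hU : IsUnit U)
    (e : h'.toMatrix = U * h.toMatrix) : h' = h := by
  obtain ⟨x, y, z, w, rfl⟩ : ∃ x y z w, U = !![x, y; z, w] := ⟨_, _, _, _, U.eta_fin_two⟩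
  simp only [toMatrix, Matrix.mul_fin_two, mul_zero, add_zero, ← Matrix.ext_iff,
    Fin.forall_fin_two, Matrix.of_apply, Matrix.cons_val', Matrix.cons_val_zero,
    Matrix.cons_val_one, Matrix.empty_val', Matrix.cons_val_fin_one] at e
  obtain ⟨⟨ea, eb⟩, ez, ed⟩ := e
  have ha : (0 : ℤ) < h.a := by exact_mod_cast h.a.pos
  obtain rfl : z = 0 := (mul_eq_zero.mp ez.symm).resolve_right ha.ne'
  rw [zero_mul, zero_add] at ed
  have hd : (0 : ℤ) < h.d := by exact_mod_cast h.d.pos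
  have hx : 0 < x := pos_of_mul_pos_left (ea ▸ by exact_mod_cast h'.a.pos) ha.le
  have hw : 0 < w := pos_of_mul_pos_left (ed ▸ by exact_mod_cast h'.d.pos) hd.le
  -- `det U = x * w` is a unit and both factors are positive
  have hxw : x * w = 1 := by
    rw [Matrix.isUnit_iff_isUnit_det, Matrix.det_fin_two_of, mul_zero, sub_zero,
      Int.isUnit_iff] at hU
    exact hU.resolve_right (by nlinarith)
  obtain rfl : x = 1 := Int.eq_one_of_mul_eq_one_right hx.le hxw
  obtain rfl : w = 1 := by simpa using hxw
  have hb : (h'.b : ℤ) = h.b := by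
    -- both sides are the remainder of `h'.b = h.b + y * d` modulo `d`
    rw [one_mul] at eb ed
    have hlt : (h.b : ℤ) < h'.d := by rw [ed]; exact_mod_cast h.b_lt
    rw [← Int.emod_eq_of_lt (by positivity) hlt, ed, ← Int.add_mul_emod_self_right _ y, ← eb,
      ← ed, Int.emod_eq_of_lt (by positivity) (by exact_mod_cast h'.b_lt)]
  ext
  · exact_mod_cast ea.trans (one_mul _)
  · exact_mod_cast ed.trans (one_mul _)
  · exact_mod_cast hb

lemma exists_isUnit_mul_upperTriangular_eq_toMatrix (a : ℕ+) {b d : ℤ} (hd : d ≠ 0) :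
    ∃ U : M2Z, IsUnit U ∧ ∃ h : Hermite, h.toMatrix = U * !![(a : ℤ), b; 0, d] := by
  have hb := Int.emod_nonneg b hd
  have hbd := Int.emod_lt b hd
  refine ⟨!![1, -(b / d); 0, d.sign], ?_,
    ⟨a, ⟨d.natAbs, Int.natAbs_pos.mpr hd⟩, (b % d).toNat, by simp only [PNat.mk_coe]; omega⟩, ?_⟩
  · rw [Matrix.isUnit_iff_isUnit_det, Matrix.det_fin_two_of, mul_zero, sub_zero, one_mul,
      Int.isUnit_iff_natAbs_eq]
    exact Int.natAbs_sign_of_ne_zero hd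
  · rw [Matrix.mul_fin_two, toMatrix, Int.sign_mul_self_eq_abs]
    simp only [Int.toNat_of_nonneg hb, PNat.mk_coe, Int.natCast_natAbs]
    rw [Int.emod_def, mul_comm d]
    simp only [one_mul, zero_mul, mul_zero, add_zero, zero_add, neg_mul, ← sub_eq_add_neg]

lemma toX_surjective : Function.Surjective toX := by
  intro x
  induction x using Quotient.inductionOn with | h M => ?_
  obtain ⟨U₁, hU₁, a, b, d, e₁⟩ := exists_isUnit_mul_eq_upperTriangular M M.2
  have hd : d ≠ 0 := by
    have hdet := mul_ne_zero ((Matrix.isUnit_iff_isUnit_det U₁).mp hU₁).ne_zero M.2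
    rw [← Matrix.det_mul, e₁, Matrix.det_fin_two_of] at hdet
    rintro rfl
    simp at hdet
  obtain ⟨U₂, hU₂, h, e₂⟩ := exists_isUnit_mul_upperTriangular_eq_toMatrix a hd
  refine ⟨h, (Quotient.sound (show leftGL.r M _ from ⟨(hU₂.mul hU₁).unit, ?_⟩)).symm⟩
  rw [IsUnit.unit_spec, mul_assoc, e₁, ← e₂]

lemma toX_injective : Function.Injective toX := fun _ _ e =>
  let ⟨u, hu⟩ := Quotient.exact e
  (eq_of_toMatrix_eq_mul u.isUnit hu).symm

def equivX : Hermite ≃ X := Equiv.ofBijective toX ⟨toX_injective, toX_surjective⟩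

lemma detAbs_toX (h : Hermite) : detAbs h.toX = h.det := by
  change h.toMatrix.det.natAbs = h.det
  rw [det_toMatrix, Int.natAbs_natCast]

def content (h : Hermite) : ℕ := Nat.gcd h.a (Nat.gcd h.b h.d)

def IsPrimitive (h : Hermite) : Prop := h.content = 1

lemma isPrimitive_toMatrix_iff (h : Hermite) : _root_.IsPrimitive h.toMatrix ↔ h.IsPrimitive := by
  constructor
  · intro hp
    have hc : IsUnit (h.content : ℤ) := hp _ <| by
      simp only [Fin.forall_fin_two, toMatrix, Matrix.of_apply, Matrix.cons_val',
        Matrix.cons_val_zero, Matrix.cons_val_one, Matrix.empty_val', Matrix.cons_val_fin_one,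
        Int.natCast_dvd_natCast, dvd_zero, content]
      exact ⟨⟨Nat.gcd_dvd_left _ _, (Nat.gcd_dvd_right _ _).trans (Nat.gcd_dvd_left _ _)⟩,
        trivial, (Nat.gcd_dvd_right _ _).trans (Nat.gcd_dvd_right _ _)⟩
    simpa [Int.isUnit_iff_natAbs_eq, IsPrimitive] using hc
  · intro hp k hk
    have ha := hk 0 0
    have hb := hk 0 1
    have hd := hk 1 1
    simp only [toMatrix, Matrix.of_apply, Matrix.cons_val', Matrix.cons_val_zero,
      Matrix.cons_val_one, Matrix.empty_val', Matrix.cons_val_fin_one, Int.dvd_natCast] at ha hb hd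
    rw [Int.isUnit_iff_natAbs_eq, ← Nat.dvd_one, ← hp]
    exact Nat.dvd_gcd ha (Nat.dvd_gcd hb hd)

lemma primClass_toX_iff (h : Hermite) : PrimClass h.toX ↔ h.IsPrimitive :=
  isPrimitive_toMatrix_iff h

def primitiveEquiv : {h : Hermite // h.IsPrimitive} ≃ {x : X // PrimClass x} :=
  equivX.subtypeEquiv fun h => (primClass_toX_iff h).symm

instance : SMul ℕ+ Hermite where
  smul g h := ⟨g * h.a, g * h.d, g * h.b, by
    rw [PNat.mul_coe]; exact Nat.mul_lt_mul_of_pos_left h.b_lt g.pos⟩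

@[simp] lemma smul_a (g : ℕ+) (h : Hermite) : (g • h).a = g * h.a := rfl
@[simp] lemma smul_d (g : ℕ+) (h : Hermite) : (g • h).d = g * h.d := rfl
@[simp] lemma smul_b (g : ℕ+) (h : Hermite) : (g • h).b = g * h.b := rfl

lemma det_smul (g : ℕ+) (h : Hermite) : (g • h).det = (g * g) * h.det := by
  simp only [det, smul_a, smul_d, PNat.mul_coe]
  ring

lemma content_smul (g : ℕ+) (h : Hermite) : (g • h).content = g * h.content := by
  simp only [content, smul_a, smul_b, smul_d, PNat.mul_coe, Nat.gcd_mul_left]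

lemma smul_left_cancel (g : ℕ+) {h h' : Hermite} (e : g • h = g • h') : h = h' := by
  ext
  · simpa using congrArg a e
  · simpa using congrArg d e
  · simpa using congrArg b e

lemma exists_isPrimitive_smul_eq (h : Hermite) :
    ∃ (g : ℕ+) (h' : Hermite), h'.IsPrimitive ∧ g • h' = h := by
  have hc : 0 < h.content := Nat.gcd_pos_of_pos_left _ h.a.pos
  obtain ⟨a, ha⟩ : h.content ∣ h.a := Nat.gcd_dvd_left _ _
  obtain ⟨b, hb⟩ : h.content ∣ h.b := (Nat.gcd_dvd_right _ _).trans (Nat.gcd_dvd_left _ _)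
  obtain ⟨d, hd⟩ : h.content ∣ h.d := (Nat.gcd_dvd_right _ _).trans (Nat.gcd_dvd_right _ _)
  have hbd : b < d := Nat.lt_of_mul_lt_mul_left (hb ▸ hd ▸ h.b_lt)
  let h' : Hermite := ⟨⟨a, Nat.pos_of_mul_pos_left (ha ▸ h.a.pos)⟩,
    ⟨d, Nat.pos_of_mul_pos_left (hd ▸ h.d.pos)⟩, b, hbd⟩
  let g : ℕ+ := ⟨h.content, hc⟩
  have e : g • h' = h := by
    ext
    · exact PNat.coe_injective ha.symm
    · exact PNat.coe_injective hd.symm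
    · exact hb.symm
  refine ⟨g, h', Nat.eq_of_mul_eq_mul_left hc ?_, e⟩
  change (g : ℕ) * h'.content = g * 1
  rw [mul_one, ← content_smul, e]
  rfl

lemma smul_isPrimitive_bijective :
    Function.Bijective fun p : ℕ+ × {h : Hermite // h.IsPrimitive} => p.1 • p.2.1 := by
  constructor
  · rintro ⟨g, h, hh : h.content = 1⟩ ⟨g', h', hh' : h'.content = 1⟩ e
    dsimp only at e
    obtain rfl : g = g' := PNat.coe_injective <| by
      simpa [content_smul, hh, hh'] using congrArg content e
    obtain rfl := smul_left_cancel g e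
    rfl
  · intro h
    obtain ⟨g, h', hh', e⟩ := exists_isPrimitive_smul_eq h
    exact ⟨(g, ⟨h', hh'⟩), e⟩

def smulPrimitiveEquiv : ℕ+ × {h : Hermite // h.IsPrimitive} ≃ Hermite :=
  Equiv.ofBijective _ smul_isPrimitive_bijective

def equivProdSigma : Hermite ≃ ℕ+ × Σ d : ℕ+, Fin d where
  toFun h := (h.a, ⟨h.d, ⟨h.b, h.b_lt⟩⟩)
  invFun p := ⟨p.1, p.2.1, p.2.2, p.2.2.isLt⟩
  left_inv _ := rfl
  right_inv _ := rfl

lemma cpow_neg_det (s : ℂ) (h : Hermite) :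
    ((h.det : ℕ) : ℂ) ^ (-s) = ((h.a : ℕ) : ℂ) ^ (-s) * ((h.d : ℕ) : ℂ) ^ (-s) := by
  rw [det, Nat.cast_mul, Complex.natCast_mul_natCast_cpow]

lemma cpow_neg_det_smul (s : ℂ) (g : ℕ+) (h : Hermite) :
    (((g • h).det : ℕ) : ℂ) ^ (-s) = ((g : ℕ) : ℂ) ^ (-(2 * s)) * ((h.det : ℕ) : ℂ) ^ (-s) := by
  rw [det_smul, Nat.cast_mul, Complex.natCast_mul_natCast_cpow, Nat.cast_mul,
    Complex.natCast_mul_natCast_cpow, ← Complex.cpow_add _ _ (Nat.cast_ne_zero.mpr g.ne_zero),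
    two_mul, neg_add]

variable {s : ℂ}

lemma summable_norm_cpow_neg_det (hs : 2 < s.re) :
    Summable fun h : Hermite => ‖((h.det : ℕ) : ℂ) ^ (-s)‖ := by
  refine equivProdSigma.symm.summable_iff.mp <|
    ((summable_norm_pnat_cpow_neg (s := s) (by linarith)).mul_of_nonneg
      (summable_norm_sigma_fin_cpow_neg hs) (fun _ => norm_nonneg _)
      (fun _ => norm_nonneg _)).congr fun p => ?_
  rw [Function.comp_apply, cpow_neg_det, norm_mul]
  rfl

lemma tsum_cpow_neg_det (hs : 2 < s.re) :
    ∑' h : Hermite, ((h.det : ℕ) : ℂ) ^ (-s) = riemannZeta s * riemannZeta (s - 1) := by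
  rw [← equivProdSigma.symm.tsum_eq, ← tsum_pnat_cpow_neg (by linarith),
    ← tsum_sigma_fin_cpow_neg hs, tsum_mul_tsum_of_summable_norm
      (summable_norm_pnat_cpow_neg (by linarith)) (summable_norm_sigma_fin_cpow_neg hs)]
  exact tsum_congr fun p => cpow_neg_det s _

lemma tsum_cpow_neg_det_eq_riemannZeta_mul (hs : 2 < s.re) :
    ∑' h : Hermite, ((h.det : ℕ) : ℂ) ^ (-s) =
      riemannZeta (2 * s) * ∑' h : {h : Hermite // h.IsPrimitive}, ((h.1.det : ℕ) : ℂ) ^ (-s) := by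
  have h2s : 1 < (2 * s).re := one_lt_re_two_mul (by linarith)
  rw [← smulPrimitiveEquiv.tsum_eq, ← tsum_pnat_cpow_neg h2s, tsum_mul_tsum_of_summable_norm
    (summable_norm_pnat_cpow_neg h2s)
    ((summable_norm_cpow_neg_det hs).comp_injective Subtype.val_injective)]
  exact tsum_congr fun p => cpow_neg_det_smul s p.1 p.2.1

end Hermite

open Complex in
/-- for `Re(s) > 2`, the zeta function of Conway's big picture
(the set `𝔓 ⊆ X` of primitive classes) is
`ζ_𝔓(s) = Σ_{x ∈ 𝔓} |det x|^{−s} = ζ(s)ζ(s−1)/ζ(2s)`. -/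
theorem bigPicture_zeta (s : ℂ) (hs : 2 < s.re) :
    ∑' x : {x : X // PrimClass x}, ((detAbs x.1 : ℂ) ^ (-s)) =
      riemannZeta s * riemannZeta (s - 1) / riemannZeta (2 * s) := by
  have hζ : riemannZeta (2 * s) ≠ 0 :=
    riemannZeta_ne_zero_of_one_lt_re (one_lt_re_two_mul (by linarith))
  rw [← Hermite.primitiveEquiv.tsum_eq, eq_div_iff hζ, mul_comm, ← Hermite.tsum_cpow_neg_det hs,
    Hermite.tsum_cpow_neg_det_eq_riemannZeta_mul hs]
  congr 1
  exact tsum_congr fun h => congrArg (fun n : ℕ => (n : ℂ) ^ (-s)) (Hermite.detAbs_toX h.1)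
end
end
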